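/- arXiv:math/9810183 — 3 statements merged into one kernel-verified Lean document; each statement's English description precedes it below -/
import Mathlib

section
/- Let γ : ℝ × ℝ → ℝ³ (parameters (s, t)) be C² with γ(0, t) = 0 for all t, ‖∂γ/∂s(s, t)‖ = 1 for all s, t (unit-speed in s), ∂γ/∂t(0, 0) = 0, and ∂²γ/∂s∂t(0, 0) = 0. Suppose all second and mixed partials are bounded by a constant M on [0, R] × {0}. Define r(s, t) = ‖γ(s, t) − γ(0, t)‖. Then there is a constant C depending only on M such that |∂r/∂t(R, 0)| ≤ C·R² for all 0 < R ≤ 1 with r(s, 0) ≥ s/2 on (0, R]. -/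
/-!
Along `s ↦ γ(s, 0)` write `c = γ`, `T = γ_s`, `V = γ_t` and `W = γ_st = V'`. Differentiating
`‖γ_s‖ = 1` in `t` and using the symmetry of second derivatives gives `⟪T, W⟫ = 0`. Since
`c(0) = V(0) = 0` and the second derivatives are bounded by `M`, the mean value inequality gives
`‖V(s)‖ ≤ M s`, `‖c(s) - s T(s)‖ ≤ M s²` and, as `⟪T, V⟫' = ⟪T', V⟫`, `|⟪T, V⟫(s)| ≤ M² s²`.
Splitting `⟪c, V⟫ = ⟪c - s T, V⟫ + s ⟪T, V⟫` yields `|⟪c, V⟫(R)| ≤ 2 M² R³`, and since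
`r r_t = ⟪c, V⟫` with `r(R, 0) ≥ R / 2`, finally `|r_t(R, 0)| ≤ 4 M² R²`.
-/

open Set RealInnerProductSpace

variable {E : Type*} [NormedAddCommGroup E] [InnerProductSpace ℝ E]

theorem norm_le_mul_of_hasDerivAt_of_eq_zero {F : Type*} [NormedAddCommGroup F]
    [NormedSpace ℝ F] {f f' : ℝ → F} {C s : ℝ} (hf : ∀ x, HasDerivAt f (f' x) x) (hf0 : f 0 = 0)
    (hs : 0 ≤ s) (bound : ∀ x ∈ Ico 0 s, ‖f' x‖ ≤ C) : ‖f s‖ ≤ C * s := by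
  simpa [hf0] using norm_image_sub_le_of_norm_deriv_le_segment'
    (fun x _ => (hf x).hasDerivWithinAt) bound s ⟨hs, le_rfl⟩

theorem inner_eq_zero_of_hasDerivAt_of_norm_eq {u : ℝ → E} {u' : E} {t r : ℝ}
    (hu : HasDerivAt u u' t) (hr : ∀ τ, ‖u τ‖ = r) : ⟪u t, u'⟫ = 0 := by
  have hconst : HasDerivAt (‖u ·‖ ^ 2) 0 t := by
    simpa only [hr] using hasDerivAt_const t (r ^ 2)
  have := hu.norm_sq.unique hconst
  linarith

theorem HasDerivAt.norm {u : ℝ → E} {u' : E} {t : ℝ} (hu : HasDerivAt u u' t) (h0 : u t ≠ 0) :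
    HasDerivAt (‖u ·‖) (⟪u t, u'⟫ / ‖u t‖) t := by
  have hpos : 0 < ‖u t‖ := norm_pos_iff.2 h0
  have := hu.norm_sq.sqrt (by positivity)
  simp only [Real.sqrt_sq (norm_nonneg _)] at this
  convert this using 1
  field_simp

theorem norm_fderiv_fderiv_apply_le {𝕜 G F : Type*} [NontriviallyNormedField 𝕜]
    [NormedAddCommGroup G] [NormedSpace 𝕜 G] [NormedAddCommGroup F] [NormedSpace 𝕜 F]
    (f : G → F) (p v w : G) :
    ‖fderiv 𝕜 (fderiv 𝕜 f) p v w‖ ≤ ‖iteratedFDeriv 𝕜 2 f p‖ * (‖v‖ * ‖w‖) := by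
  simpa [iteratedFDeriv_two_apply, Fin.prod_univ_two] using
    (iteratedFDeriv 𝕜 2 f p).le_opNorm ![v, w]

section CurveWithField

variable {c T A V W : ℝ → E} {M s : ℝ}

theorem norm_sub_smul_le_of_hasDerivAt (hc : ∀ x, HasDerivAt c (T x) x)
    (hT : ∀ x, HasDerivAt T (A x) x) (hc0 : c 0 = 0) (hs : 0 ≤ s)
    (hA : ∀ x ∈ Icc 0 s, ‖A x‖ ≤ M) : ‖c s - s • T s‖ ≤ M * s ^ 2 := by
  have hderiv : ∀ x, HasDerivAt (fun x => c x - x • T x) (-(x • A x)) x := fun x =>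
    ((hc x).sub ((hasDerivAt_id' x).smul (hT x))).congr_deriv (by rw [one_smul]; abel)
  have := norm_le_mul_of_hasDerivAt_of_eq_zero hderiv (by simp [hc0]) hs (C := M * s)
    fun x hx => by
      rw [norm_neg, norm_smul, Real.norm_of_nonneg hx.1, mul_comm M]
      exact mul_le_mul hx.2.le (hA x (Ico_subset_Icc_self hx)) (norm_nonneg _) hs
  simpa [sq, mul_assoc] using this

theorem abs_inner_le_of_inner_deriv_eq_zero (hT : ∀ x, HasDerivAt T (A x) x)
    (hV : ∀ x, HasDerivAt V (W x) x) (hV0 : V 0 = 0) (horth : ∀ x, ⟪T x, W x⟫ = 0) (hs : 0 ≤ s)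
    (hA : ∀ x ∈ Icc 0 s, ‖A x‖ ≤ M) (hW : ∀ x ∈ Icc 0 s, ‖W x‖ ≤ M) :
    |⟪T s, V s⟫| ≤ M ^ 2 * s ^ 2 := by
  have hM : 0 ≤ M := (norm_nonneg _).trans (hA 0 ⟨le_rfl, hs⟩)
  have hV_le : ∀ x ∈ Ico 0 s, ‖V x‖ ≤ M * s := fun x hx =>
    calc ‖V x‖ ≤ M * x := norm_le_mul_of_hasDerivAt_of_eq_zero hV hV0 hx.1
          fun y hy => hW y ⟨hy.1, hy.2.le.trans hx.2.le⟩
      _ ≤ M * s := by gcongr; exact hx.2.le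
  have := norm_le_mul_of_hasDerivAt_of_eq_zero (C := M * (M * s))
    (fun x => (hT x).inner ℝ (hV x)) (by simp [hV0]) hs fun x hx => by
      rw [horth, zero_add, Real.norm_eq_abs]
      exact (abs_real_inner_le_norm _ _).trans
        (mul_le_mul (hA x (Ico_subset_Icc_self hx)) (hV_le x hx) (norm_nonneg _) hM)
  simpa [Real.norm_eq_abs, sq, mul_assoc] using this

theorem abs_inner_antideriv_le_of_inner_deriv_eq_zero (hc : ∀ x, HasDerivAt c (T x) x)
    (hT : ∀ x, HasDerivAt T (A x) x) (hV : ∀ x, HasDerivAt V (W x) x) (hc0 : c 0 = 0)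
    (hV0 : V 0 = 0) (horth : ∀ x, ⟪T x, W x⟫ = 0) (hs : 0 ≤ s)
    (hA : ∀ x ∈ Icc 0 s, ‖A x‖ ≤ M) (hW : ∀ x ∈ Icc 0 s, ‖W x‖ ≤ M) :
    |⟪c s, V s⟫| ≤ 2 * M ^ 2 * s ^ 3 := by
  have hM : 0 ≤ M := (norm_nonneg _).trans (hA 0 ⟨le_rfl, hs⟩)
  have hsplit : ⟪c s, V s⟫ = ⟪c s - s • T s, V s⟫ + s * ⟪T s, V s⟫ := by
    rw [inner_sub_left, real_inner_smul_left]; ring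
  have hV_le : ‖V s‖ ≤ M * s := norm_le_mul_of_hasDerivAt_of_eq_zero hV hV0 hs
    fun x hx => hW x (Ico_subset_Icc_self hx)
  have hrem := norm_sub_smul_le_of_hasDerivAt hc hT hc0 hs hA
  have hTV := abs_inner_le_of_inner_deriv_eq_zero hT hV hV0 horth hs hA hW
  calc |⟪c s, V s⟫| ≤ ‖c s - s • T s‖ * ‖V s‖ + s * |⟪T s, V s⟫| := by
        rw [hsplit]
        refine (abs_add_le _ _).trans (add_le_add (abs_real_inner_le_norm _ _) ?_)
        rw [abs_mul, abs_of_nonneg hs]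
    _ ≤ M * s ^ 2 * (M * s) + s * (M ^ 2 * s ^ 2) := by gcongr
    _ = 2 * M ^ 2 * s ^ 3 := by ring

end CurveWithField

section Slices

variable {F : Type*} [NormedAddCommGroup F] [NormedSpace ℝ F] {f : ℝ × ℝ → F}

theorem DifferentiableAt.hasDerivAt_slice_fst {s t : ℝ} (hf : DifferentiableAt ℝ f (s, t)) :
    HasDerivAt (fun s' => f (s', t)) (fderiv ℝ f (s, t) (1, 0)) s :=
  hf.hasFDerivAt.comp_hasDerivAt s ((hasDerivAt_id s).prodMk (hasDerivAt_const s t))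

theorem DifferentiableAt.hasDerivAt_slice_snd {s t : ℝ} (hf : DifferentiableAt ℝ f (s, t)) :
    HasDerivAt (fun t' => f (s, t')) (fderiv ℝ f (s, t) (0, 1)) t :=
  hf.hasFDerivAt.comp_hasDerivAt t ((hasDerivAt_const t s).prodMk (hasDerivAt_id t))

theorem ContDiff.hasDerivAt_fderiv_slice_fst (hf : ContDiff ℝ 2 f) (s t : ℝ) (v : ℝ × ℝ) :
    HasDerivAt (fun s' => fderiv ℝ f (s', t) v) (fderiv ℝ (fderiv ℝ f) (s, t) (1, 0) v) s :=
  (((hf.fderiv_right le_rfl).differentiable one_ne_zero _).hasDerivAt_slice_fst).clm_apply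
    (hasDerivAt_const s v) |>.congr_deriv (by simp)

theorem ContDiff.hasDerivAt_fderiv_slice_snd (hf : ContDiff ℝ 2 f) (s t : ℝ) (v : ℝ × ℝ) :
    HasDerivAt (fun t' => fderiv ℝ f (s, t') v) (fderiv ℝ (fderiv ℝ f) (s, t) (0, 1) v) t :=
  (((hf.fderiv_right le_rfl).differentiable one_ne_zero _).hasDerivAt_slice_snd).clm_apply
    (hasDerivAt_const t v) |>.congr_deriv (by simp)

theorem ContDiff.inner_fderiv_fderiv_eq_zero_of_norm_fderiv_eq {γ : ℝ × ℝ → E}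
    (hγ : ContDiff ℝ 2 γ) {s r : ℝ} (hr : ∀ t, ‖fderiv ℝ γ (s, t) (1, 0)‖ = r) (t : ℝ) :
    ⟪fderiv ℝ γ (s, t) (1, 0), fderiv ℝ (fderiv ℝ γ) (s, t) (1, 0) (0, 1)⟫ = 0 := by
  rw [(hγ.contDiffAt.isSymmSndFDerivAt (by simp)) (1, 0) (0, 1)]
  exact inner_eq_zero_of_hasDerivAt_of_norm_eq (hγ.hasDerivAt_fderiv_slice_snd s t (1, 0)) hr

end Slices

theorem chordal_distance_time_derivative_bound (M : ℝ) (hM : 0 < M) :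
    ∃ C : ℝ, 0 < C ∧
      ∀ (γ : ℝ × ℝ → EuclideanSpace ℝ (Fin 3)) (R : ℝ),
        ContDiff ℝ 2 γ →
        (∀ t, γ (0, t) = 0) →
        (∀ s t, ‖deriv (fun s' => γ (s', t)) s‖ = 1) →
        deriv (fun t => γ (0, t)) 0 = 0 →
        deriv (fun s => deriv (fun t => γ (s, t)) 0) 0 = 0 →
        (∀ s ∈ Set.Icc (0 : ℝ) R, ‖iteratedFDeriv ℝ 2 γ (s, 0)‖ ≤ M) →
        0 < R → R ≤ 1 →
        (∀ s ∈ Set.Ioc (0 : ℝ) R, s / 2 ≤ ‖γ (s, 0) - γ (0, 0)‖) →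
        |deriv (fun t => ‖γ (R, t) - γ (0, t)‖) 0| ≤ C * R ^ 2 := by
  refine ⟨4 * M ^ 2, by positivity, ?_⟩
  intro γ R hγ hγ0 hunit hv0 _ hbound hR _ hlow
  have hd : Differentiable ℝ γ := hγ.differentiable two_ne_zero
  have hunit' (s t : ℝ) : ‖fderiv ℝ γ (s, t) (1, 0)‖ = 1 := by
    rw [← (hd _).hasDerivAt_slice_fst.deriv]; exact hunit s t
  have hv0' : fderiv ℝ γ (0, 0) (0, 1) = 0 := by
    rw [← (hd _).hasDerivAt_slice_snd.deriv]; exact hv0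
  have hbound' : ∀ s ∈ Icc 0 R, ∀ v w : ℝ × ℝ, ‖v‖ = 1 → ‖w‖ = 1 →
      ‖fderiv ℝ (fderiv ℝ γ) (s, 0) v w‖ ≤ M := fun s hs v w hv hw =>
    calc _ ≤ ‖iteratedFDeriv ℝ 2 γ (s, 0)‖ * (‖v‖ * ‖w‖) := norm_fderiv_fderiv_apply_le γ _ v w
      _ ≤ M := by rw [hv, hw, mul_one, mul_one]; exact hbound s hs
  have hcV : |⟪γ (R, 0), fderiv ℝ γ (R, 0) (0, 1)⟫| ≤ 2 * M ^ 2 * R ^ 3 :=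
    abs_inner_antideriv_le_of_inner_deriv_eq_zero (fun s => (hd _).hasDerivAt_slice_fst)
      (fun s => hγ.hasDerivAt_fderiv_slice_fst s 0 (1, 0))
      (fun s => hγ.hasDerivAt_fderiv_slice_fst s 0 (0, 1)) (hγ0 0) hv0'
      (fun s => hγ.inner_fderiv_fderiv_eq_zero_of_norm_fderiv_eq (hunit' s) 0) hR.le
      (fun s hs => hbound' s hs _ _ (by simp) (by simp))
      (fun s hs => hbound' s hs _ _ (by simp) (by simp))
  have hfar : R / 2 ≤ ‖γ (R, 0)‖ := by simpa [hγ0] using hlow R ⟨hR, le_rfl⟩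
  have hr : HasDerivAt (fun t => ‖γ (R, t) - γ (0, t)‖)
      (⟪γ (R, 0), fderiv ℝ γ (R, 0) (0, 1)⟫ / ‖γ (R, 0)‖) 0 := by
    simp only [hγ0, sub_zero]
    exact (hd _).hasDerivAt_slice_snd.norm (norm_pos_iff.1 (by linarith))
  rw [hr.deriv, abs_div, abs_norm]
  calc _ ≤ 2 * M ^ 2 * R ^ 3 / (R / 2) := div_le_div₀ (by positivity) hcV (by positivity) hfar
    _ = 4 * M ^ 2 * R ^ 2 := by field_simp; ring
end

section
/- Let e, f, d : ℝ → ℝ be differentiable, L > 0, C₀ > 0, and suppose for all t: |d(t)| ≥ L/C₀, |e(t)| ≤ C₀·L, |f(t)| ≥ L/C₀, |d'(t)| ≤ C₀·L², |d/dt √(e(t)² + f(t)²)| ≤ C₀·L², and |d/dt √((e(t)−d(t))² + f(t)²)| ≤ C₀·L² (with both square roots bounded below by L/C₀ and above by C₀·L). Then there is a constant C₁ depending only on C₀ with |e'(t)| ≤ C₁·L² and |f'(t)| ≤ C₁·L² for all t. -/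
/-!
Differentiating the distances `|AD| = √(e² + f²)` and `|CD| = √((e - d)² + f²)` gives
`e e' + f f' = O(L³)` and `(e - d)(e' - d') + f f' = O(L³)`. Subtracting eliminates `f f'` and
leaves `d e' = O(L³)`, so `e' = O(L²)` because `|d| ≳ L`; then `f f' = O(L³)` and `|f| ≳ L`
give `f' = O(L²)`.
-/

theorem sqrt_mul_deriv_sqrt_sq_add_sq {u v : ℝ → ℝ} {t : ℝ} (hu : DifferentiableAt ℝ u t)
    (hv : DifferentiableAt ℝ v t) (hvt : v t ≠ 0) :
    √(u t ^ 2 + v t ^ 2) * deriv (fun s => √(u s ^ 2 + v s ^ 2)) t =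
      u t * deriv u t + v t * deriv v t := by
  have hpos : 0 < u t ^ 2 + v t ^ 2 := by positivity
  have hsq : HasDerivAt (fun s => u s ^ 2 + v s ^ 2)
      (2 * u t * deriv u t + 2 * v t * deriv v t) t := by
    simpa using (hu.hasDerivAt.fun_pow 2).fun_add (hv.hasDerivAt.fun_pow 2)
  rw [(hsq.sqrt hpos.ne').deriv]
  field_simp

theorem abs_mul_add_mul_deriv_le {u v : ℝ → ℝ} {t a b : ℝ} (hu : DifferentiableAt ℝ u t)
    (hv : DifferentiableAt ℝ v t) (hvt : v t ≠ 0) (hnorm : √(u t ^ 2 + v t ^ 2) ≤ a)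
    (hderiv : |deriv (fun s => √(u s ^ 2 + v s ^ 2)) t| ≤ b) :
    |u t * deriv u t + v t * deriv v t| ≤ a * b := by
  rw [← sqrt_mul_deriv_sqrt_sq_add_sq hu hv hvt, abs_mul, abs_of_nonneg (Real.sqrt_nonneg _)]
  exact mul_le_mul hnorm hderiv (abs_nonneg _) ((Real.sqrt_nonneg _).trans hnorm)

theorem abs_le_of_le_abs_of_abs_mul_le {x y b c : ℝ} (hc : 0 < c) (hx : c ≤ |x|)
    (hxy : |x * y| ≤ c * b) : |y| ≤ b := by
  refine le_of_mul_le_mul_left ?_ hc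
  calc c * |y| ≤ |x| * |y| := mul_le_mul_of_nonneg_right hx (abs_nonneg y)
    _ = |x * y| := (abs_mul x y).symm
    _ ≤ c * b := hxy

section PlanarRates

variable {K L E F D E' F' D' : ℝ}

theorem abs_mul_rate_le_of_inner_rates_le {a b c : ℝ} (h₁ : |E * E' + F * F'| ≤ a)
    (h₂ : |(E - D) * (E' - D') + F * F'| ≤ a) (hED : |E - D| ≤ b) (hD' : |D'| ≤ c) :
    |D * E'| ≤ 2 * a + b * c := by
  have hid : D * E' = (E * E' + F * F') - ((E - D) * (E' - D') + F * F') - (E - D) * D' := by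
    ring
  have hED' : |(E - D) * D'| ≤ b * c := by
    rw [abs_mul]
    exact mul_le_mul hED hD' (abs_nonneg _) ((abs_nonneg _).trans hED)
  rw [hid]
  calc _ ≤ |E * E' + F * F'| + |(E - D) * (E' - D') + F * F'| + |(E - D) * D'| :=
        (abs_sub _ _).trans (add_le_add_left (abs_sub _ _) _)
    _ ≤ 2 * a + b * c := by linarith

theorem abs_fst_rate_le (hK : 0 < K) (hL : 0 < L) (hD : L / K ≤ |D|)
    (h₁ : |E * E' + F * F'| ≤ K ^ 2 * L ^ 3)
    (h₂ : |(E - D) * (E' - D') + F * F'| ≤ K ^ 2 * L ^ 3) (hED : |E - D| ≤ K * L)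
    (hD' : |D'| ≤ K * L ^ 2) :
    |E'| ≤ 3 * K ^ 3 * L ^ 2 := by
  refine abs_le_of_le_abs_of_abs_mul_le (by positivity) hD ?_
  calc |D * E'| ≤ 2 * (K ^ 2 * L ^ 3) + K * L * (K * L ^ 2) :=
        abs_mul_rate_le_of_inner_rates_le h₁ h₂ hED hD'
    _ = L / K * (3 * K ^ 3 * L ^ 2) := by field_simp; ring

theorem abs_snd_rate_le (hK : 0 < K) (hL : 0 < L) (hF : L / K ≤ |F|) (hE : |E| ≤ K * L)
    (hE' : |E'| ≤ 3 * K ^ 3 * L ^ 2) (h₁ : |E * E' + F * F'| ≤ K ^ 2 * L ^ 3) :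
    |F'| ≤ (K ^ 3 + 3 * K ^ 5) * L ^ 2 := by
  refine abs_le_of_le_abs_of_abs_mul_le (by positivity) hF ?_
  have hEE' : |E * E'| ≤ (K * L) * (3 * K ^ 3 * L ^ 2) := by
    rw [abs_mul]
    exact mul_le_mul hE hE' (abs_nonneg _) ((abs_nonneg _).trans hE)
  calc |F * F'| = |(E * E' + F * F') - E * E'| := by rw [add_sub_cancel_left]
    _ ≤ |E * E' + F * F'| + |E * E'| := abs_sub _ _
    _ ≤ K ^ 2 * L ^ 3 + (K * L) * (3 * K ^ 3 * L ^ 2) := add_le_add h₁ hEE'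
    _ = L / K * ((K ^ 3 + 3 * K ^ 5) * L ^ 2) := by field_simp

end PlanarRates

theorem planar_vertex_coordinate_derivative_bounds (C₀ : ℝ) (hC₀ : 0 < C₀) :
    ∃ C₁ : ℝ, 0 < C₁ ∧
      ∀ (e f d : ℝ → ℝ) (L : ℝ), 0 < L →
        Differentiable ℝ e → Differentiable ℝ f → Differentiable ℝ d →
        (∀ t, L / C₀ ≤ |d t|) →
        (∀ t, |e t| ≤ C₀ * L) →
        (∀ t, L / C₀ ≤ |f t|) →
        (∀ t, |deriv d t| ≤ C₀ * L ^ 2) →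
        (∀ t, |deriv (fun t => Real.sqrt (e t ^ 2 + f t ^ 2)) t| ≤ C₀ * L ^ 2) →
        (∀ t, |deriv (fun t => Real.sqrt ((e t - d t) ^ 2 + f t ^ 2)) t| ≤ C₀ * L ^ 2) →
        (∀ t, L / C₀ ≤ Real.sqrt (e t ^ 2 + f t ^ 2) ∧
          Real.sqrt (e t ^ 2 + f t ^ 2) ≤ C₀ * L) →
        (∀ t, L / C₀ ≤ Real.sqrt ((e t - d t) ^ 2 + f t ^ 2) ∧
          Real.sqrt ((e t - d t) ^ 2 + f t ^ 2) ≤ C₀ * L) →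
        ∀ t, |deriv e t| ≤ C₁ * L ^ 2 ∧ |deriv f t| ≤ C₁ * L ^ 2 := by
  refine ⟨3 * C₀ ^ 3 + 3 * C₀ ^ 5, by positivity, ?_⟩
  intro e f d L hL he hf hd hd_lb he_ub hf_lb hd' hAD' hCD' hAD hCD t
  have hft : f t ≠ 0 := abs_pos.mp ((div_pos hL hC₀).trans_le (hf_lb t))
  have hinner₁ : |e t * deriv e t + f t * deriv f t| ≤ C₀ ^ 2 * L ^ 3 :=
    (abs_mul_add_mul_deriv_le (he t) (hf t) hft (hAD t).2 (hAD' t)).trans_eq (by ring)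
  have hinner₂ :
      |(e t - d t) * (deriv e t - deriv d t) + f t * deriv f t| ≤ C₀ ^ 2 * L ^ 3 := by
    rw [← deriv_fun_sub (he t) (hd t)]
    exact (abs_mul_add_mul_deriv_le ((he t).fun_sub (hd t)) (hf t) hft (hCD t).2
      (hCD' t)).trans_eq (by ring)
  have hed : |e t - d t| ≤ C₀ * L :=
    (Real.abs_le_sqrt (le_add_of_nonneg_right (sq_nonneg (f t)))).trans (hCD t).2
  have he' := abs_fst_rate_le hC₀ hL (hd_lb t) hinner₁ hinner₂ hed (hd' t)
  have hf' := abs_snd_rate_le hC₀ hL (hf_lb t) (he_ub t) he' hinner₁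
  constructor <;> nlinarith [pow_pos hC₀ 3, pow_pos hC₀ 5, pow_pos hL 2]
end

section
/- Let a, b, c, d : ℝ → ℝ be differentiable, L, C₀ > 0, with for all t: |d(t)| ≥ L/C₀, |d'(t)| ≤ C₀·L², |a(t)| ≤ C₀·L, |b(t)| ≤ C₀·L, |c(t)| ≤ C₀·L², |c'(t)| ≤ C₀·L, |b(t)| ≥ L/C₀, |d/dt √(a²+b²+c²)| ≤ C₀·L², and |d/dt √((a−d)²+b²+c²)| ≤ C₀·L² (with both roots in [L/C₀, C₀·L]). Then there is C₁ depending only on C₀ such that |a'(t)| ≤ C₁·L² and |b'(t)| ≤ C₁·L² for all t. -/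
/-! Differentiating the two distances |B| and |B - (d,0,0)| gives
`a a' + b b' + c c' = O(L³)` and `(a - d)(a' - d') + b b' + c c' = O(L³)`. Their difference is
`d a' - (a - d) d' = O(L³)`, and `|d| ≳ L`, `d' = O(L²)` give `a' = O(L²)`. Feeding this back into
the first relation, with `c c' = O(L³)` and `|b| ≳ L`, gives `b' = O(L²)`. -/

theorem hasDerivAt_sq_add_sq_add_sq {u v w : ℝ → ℝ} {u' v' w' t : ℝ}
    (hu : HasDerivAt u u' t) (hv : HasDerivAt v v' t) (hw : HasDerivAt w w' t) :
    HasDerivAt (fun s => u s ^ 2 + v s ^ 2 + w s ^ 2)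
      (2 * (u t * u' + v t * v' + w t * w')) t := by
  refine (((hu.fun_pow 2).add (hv.fun_pow 2)).add (hw.fun_pow 2)).congr_deriv ?_
  ring

theorem abs_hasDerivAt_le_of_abs_deriv_sqrt_le {f : ℝ → ℝ} {f' t R K : ℝ}
    (hf : HasDerivAt f f' t) (hpos : 0 < √(f t)) (hR : √(f t) ≤ R)
    (hK : |deriv (fun s => √(f s)) t| ≤ K) : |f'| ≤ 2 * R * K := by
  have hft : f t ≠ 0 := (Real.sqrt_pos.mp hpos).ne'
  have hK₀ : 0 ≤ K := (abs_nonneg _).trans hK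
  rw [(hf.sqrt hft).deriv, abs_div, abs_of_pos (by positivity : 0 < 2 * √(f t)),
    div_le_iff₀ (by positivity)] at hK
  nlinarith

/-- The derivative of the distance `√(u² + v² + w²)` is `(u u' + v v' + w w') / √(u² + v² + w²)`. -/
theorem abs_dot_le_of_abs_deriv_dist_le {u v w : ℝ → ℝ} {u' v' w' t R K : ℝ}
    (hu : HasDerivAt u u' t) (hv : HasDerivAt v v' t) (hw : HasDerivAt w w' t)
    (hpos : 0 < √(u t ^ 2 + v t ^ 2 + w t ^ 2)) (hR : √(u t ^ 2 + v t ^ 2 + w t ^ 2) ≤ R)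
    (hK : |deriv (fun s => √(u s ^ 2 + v s ^ 2 + w s ^ 2)) t| ≤ K) :
    |u t * u' + v t * v' + w t * w'| ≤ R * K := by
  have h := abs_hasDerivAt_le_of_abs_deriv_sqrt_le
    (hasDerivAt_sq_add_sq_add_sq hu hv hw) hpos hR hK
  rw [abs_mul, abs_two] at h
  linarith

theorem abs_mul_le_of_abs_dot_le {a b c d a' b' c' d' E : ℝ}
    (h₁ : |a * a' + b * b' + c * c'| ≤ E)
    (h₂ : |(a - d) * (a' - d') + b * b' + c * c'| ≤ E) :
    |d * a'| ≤ 2 * E + |a - d| * |d'| := by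
  calc |d * a'|
      = |(a * a' + b * b' + c * c') - ((a - d) * (a' - d') + b * b' + c * c')
          - (a - d) * d'| := by ring_nf
    _ ≤ |a * a' + b * b' + c * c'| + |(a - d) * (a' - d') + b * b' + c * c'|
          + |(a - d) * d'| := (abs_sub _ _).trans (add_le_add_left (abs_sub _ _) _)
    _ ≤ 2 * E + |a - d| * |d'| := by rw [abs_mul]; linarith

theorem abs_le_add_abs_add_abs_of_abs_add_add_le {x y z E : ℝ} (h : |x + y + z| ≤ E) :
    |y| ≤ E + |x| + |z| := by
  calc |y| = |(x + y + z) - x - z| := by ring_nf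
    _ ≤ |x + y + z| + |x| + |z| := (abs_sub _ _).trans (add_le_add_left (abs_sub _ _) _)
    _ ≤ E + |x| + |z| := by linarith

theorem abs_le_div_of_le_abs_of_abs_mul_le {x y m M : ℝ} (hm : 0 < m) (hx : m ≤ |x|)
    (hxy : |x * y| ≤ M) : |y| ≤ M / m := by
  rw [le_div_iff₀ hm]
  calc |y| * m ≤ |y| * |x| := mul_le_mul_of_nonneg_left hx (abs_nonneg y)
    _ = |x * y| := by rw [abs_mul, mul_comm]
    _ ≤ M := hxy

theorem offplane_vertex_coordinate_derivative_bounds (C₀ : ℝ) (hC₀ : 0 < C₀) :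
    ∃ C₁ : ℝ, 0 < C₁ ∧
      ∀ (a b c d : ℝ → ℝ) (L : ℝ), 0 < L →
        Differentiable ℝ a → Differentiable ℝ b → Differentiable ℝ c →
        Differentiable ℝ d →
        (∀ t, L / C₀ ≤ |d t|) →
        (∀ t, |deriv d t| ≤ C₀ * L ^ 2) →
        (∀ t, |a t| ≤ C₀ * L) →
        (∀ t, |b t| ≤ C₀ * L) →
        (∀ t, |c t| ≤ C₀ * L ^ 2) →
        (∀ t, |deriv c t| ≤ C₀ * L) →
        (∀ t, L / C₀ ≤ |b t|) →
        (∀ t, |deriv (fun t => Real.sqrt (a t ^ 2 + b t ^ 2 + c t ^ 2)) t|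
          ≤ C₀ * L ^ 2) →
        (∀ t, |deriv (fun t => Real.sqrt ((a t - d t) ^ 2 + b t ^ 2 + c t ^ 2)) t|
          ≤ C₀ * L ^ 2) →
        (∀ t, L / C₀ ≤ Real.sqrt (a t ^ 2 + b t ^ 2 + c t ^ 2) ∧
          Real.sqrt (a t ^ 2 + b t ^ 2 + c t ^ 2) ≤ C₀ * L) →
        (∀ t, L / C₀ ≤ Real.sqrt ((a t - d t) ^ 2 + b t ^ 2 + c t ^ 2) ∧
          Real.sqrt ((a t - d t) ^ 2 + b t ^ 2 + c t ^ 2) ≤ C₀ * L) →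
        ∀ t, |deriv a t| ≤ C₁ * L ^ 2 ∧ |deriv b t| ≤ C₁ * L ^ 2 := by
  refine ⟨5 * C₀ ^ 3 + 3 * C₀ ^ 5, by positivity, ?_⟩
  intro a b c d L hL ha hb hc hd hd_low hd' ha_up _ hc_up hc' hb_low hdist₁ hdist₂ hr₁ hr₂ t
  have hLC : 0 < L / C₀ := div_pos hL hC₀
  obtain ⟨hr₁_low, hr₁_up⟩ := hr₁ t
  obtain ⟨hr₂_low, hr₂_up⟩ := hr₂ t
  have hdot₁ := abs_dot_le_of_abs_deriv_dist_le (ha t).hasDerivAt (hb t).hasDerivAt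
    (hc t).hasDerivAt (hLC.trans_le hr₁_low) hr₁_up (hdist₁ t)
  have hdot₂ := abs_dot_le_of_abs_deriv_dist_le ((ha t).hasDerivAt.sub (hd t).hasDerivAt)
    (hb t).hasDerivAt (hc t).hasDerivAt (hLC.trans_le hr₂_low) hr₂_up (hdist₂ t)
  have had : |a t - d t| ≤ C₀ * L :=
    (Real.abs_le_sqrt (by nlinarith [sq_nonneg (b t), sq_nonneg (c t)])).trans hr₂_up
  have hda : |d t * deriv a t| ≤ 3 * C₀ ^ 2 * L ^ 3 := by
    have := abs_mul_le_of_abs_dot_le hdot₁ hdot₂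
    nlinarith [mul_le_mul had (hd' t) (abs_nonneg _) (by positivity)]
  have ha' : |deriv a t| ≤ 3 * C₀ ^ 3 * L ^ 2 :=
    (abs_le_div_of_le_abs_of_abs_mul_le hLC (hd_low t) hda).trans_eq (by field_simp)
  have hbb : |b t * deriv b t| ≤ (2 * C₀ ^ 2 + 3 * C₀ ^ 4) * L ^ 3 := by
    have := abs_le_add_abs_add_abs_of_abs_add_add_le hdot₁
    rw [abs_mul (a t), abs_mul (c t)] at this
    nlinarith [mul_le_mul (ha_up t) ha' (abs_nonneg _) (by positivity),
      mul_le_mul (hc_up t) (hc' t) (abs_nonneg _) (by positivity)]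
  have hb' : |deriv b t| ≤ (2 * C₀ ^ 3 + 3 * C₀ ^ 5) * L ^ 2 :=
    (abs_le_div_of_le_abs_of_abs_mul_le hLC (hb_low t) hbb).trans_eq (by field_simp)
  constructor <;> nlinarith [pow_pos hC₀ 3, pow_pos hC₀ 5, sq_nonneg L]
end
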